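/- arXiv:2310.11824 — 2 statements merged into one kernel-verified Lean document; each statement's English description precedes it below -/
import Mathlib

section
/- For any g ≥ 1, the set of symplectic 2g×2g integer matrices (A B; C D) (in g×g block form) such that all diagonal entries of CᵀA and of DᵀB are even, forms a subgroup of the symplectic group Sp_{2g}(ℤ). -/
open Matrix

/-- The standard symplectic form `J = (0 I; -I 0)`. -/
def Jmat (g : ℕ) : Matrix (Fin g ⊕ Fin g) (Fin g ⊕ Fin g) ℤ :=
  Matrix.fromBlocks 0 1 (-1) 0

/-- `N` is symplectic: `NᵀJN = J`. -/
def IsSymplecticInt (g : ℕ) (N : Matrix (Fin g ⊕ Fin g) (Fin g ⊕ Fin g) ℤ) : Prop :=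
  Nᵀ * Jmat g * N = Jmat g

/-- The parity condition: writing `N = (A B; C D)` in `g×g` blocks, all diagonal
entries of `CᵀA` and of `DᵀB` are even. -/
def EvenDiagCond (g : ℕ) (N : Matrix (Fin g ⊕ Fin g) (Fin g ⊕ Fin g) ℤ) : Prop :=
  ∀ i : Fin g,
    Even (((N.toBlocks₂₁)ᵀ * N.toBlocks₁₁) i i) ∧
    Even (((N.toBlocks₂₂)ᵀ * N.toBlocks₁₂) i i)

/-!
Reducing a symplectic matrix `(A B; C D)` mod 2 changes the hyperbolic quadratic form
`q(x, y) = x ⬝ y` on `(ℤ/2)^{2g}` by `∑ (CᵀA)ᵢᵢ xᵢ² + ∑ (DᵀB)ᵢᵢ yᵢ²`: the cross terms collapse to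
`x ⬝ y` because `AᵀD - CᵀB = 1`, and a symmetric form `v ⬝ S v` is additive in characteristic two.
So the parity condition says exactly that the reduction preserves `q`, and the matrices in question
form the intersection of the symplectic units with the preimage of the stabilizer of `q`.
-/

lemma forall_sum_mul_sq_eq_zero_iff {ι R : Type*} [Fintype ι] [DecidableEq ι] [Semiring R]
    (c : ι → R) : (∀ v : ι → R, ∑ k, c k * v k ^ 2 = 0) ↔ c = 0 := by
  refine ⟨fun h ↦ funext fun k ↦ ?_, fun h v ↦ by simp [h]⟩
  simpa [Pi.single_apply] using h (Pi.single k 1)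

def stabilizerUnits {m R S : Type*} [Fintype m] [DecidableEq m] [Semiring R]
    (Q : (m → R) → S) : Subgroup (Matrix m m R)ˣ where
  carrier := {U | ∀ v, Q ((U : Matrix m m R) *ᵥ v) = Q v}
  one_mem' v := by simp
  mul_mem' hU hV v := by rw [Units.val_mul, ← mulVec_mulVec, hU, hV]
  inv_mem' {U} hU v := by rw [← hU, mulVec_mulVec, Units.mul_inv, one_mulVec]

section HyperbolicForm

variable {n R : Type*} [Fintype n] [CommRing R]

def hyperbolicForm (v : n ⊕ n → R) : R := ∑ i, v (Sum.inl i) * v (Sum.inr i)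

lemma hyperbolicForm_elim (x y : n → R) : hyperbolicForm (Sum.elim x y) = x ⬝ᵥ y := rfl

variable [DecidableEq n] [CharP R 2]

lemma dotProduct_mulVec_self_of_isSymm {S : Matrix n n R} (hS : S.IsSymm) (x : n → R) :
    x ⬝ᵥ S *ᵥ x = ∑ i, S i i * x i ^ 2 := by
  -- the cross terms `2 (u ⬝ᵥ S *ᵥ w)` vanish, so `v ↦ v ⬝ᵥ S *ᵥ v` is additive
  let Q : (n → R) →+ R :=
    { toFun := fun v ↦ v ⬝ᵥ S *ᵥ v
      map_zero' := by simp
      map_add' := fun u w ↦ by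
        have hcross : w ⬝ᵥ S *ᵥ u = u ⬝ᵥ S *ᵥ w := by
          rw [dotProduct_mulVec, ← mulVec_transpose, hS.eq, dotProduct_comm]
        simp only [mulVec_add, dotProduct_add, add_dotProduct, hcross]
        linear_combination CharTwo.add_self_eq_zero (u ⬝ᵥ S *ᵥ w) }
  calc x ⬝ᵥ S *ᵥ x = Q (∑ i, Pi.single i (x i)) := by rw [Finset.univ_sum_single]; rfl
    _ = ∑ i, S i i * x i ^ 2 := by
      rw [map_sum]
      refine Finset.sum_congr rfl fun i _ ↦ ?_
      simp only [Q, AddMonoidHom.coe_mk, ZeroHom.coe_mk, mulVec_single, op_smul_eq_smul,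
        dotProduct_smul, single_dotProduct, col_apply, smul_eq_mul]
      ring

lemma hyperbolicForm_fromBlocks_mulVec {A B C D : Matrix n n R} (hAC : Aᵀ * C = Cᵀ * A)
    (hBD : Bᵀ * D = Dᵀ * B) (hAD : Aᵀ * D - Cᵀ * B = 1) (v : n ⊕ n → R) :
    hyperbolicForm (fromBlocks A B C D *ᵥ v) =
      hyperbolicForm v + ∑ k, Sum.elim (Cᵀ * A).diag (Dᵀ * B).diag k * v k ^ 2 := by
  have dot_mulVec (M N : Matrix n n R) (u w : n → R) :
      (M *ᵥ u) ⬝ᵥ (N *ᵥ w) = u ⬝ᵥ (Mᵀ * N) *ᵥ w := by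
    rw [← mulVec_mulVec, dotProduct_mulVec u, vecMul_transpose]
  have hCA : (Cᵀ * A).IsSymm := by rw [IsSymm, transpose_mul, transpose_transpose, hAC]
  have hDB : (Dᵀ * B).IsSymm := by rw [IsSymm, transpose_mul, transpose_transpose, hBD]
  obtain ⟨x, y, rfl⟩ : ∃ x y, v = Sum.elim x y :=
    ⟨v ∘ Sum.inl, v ∘ Sum.inr, by ext (i | i) <;> rfl⟩
  have hxx : (A *ᵥ x) ⬝ᵥ (C *ᵥ x) = ∑ i, (Cᵀ * A) i i * x i ^ 2 := by
    rw [dot_mulVec, hAC, dotProduct_mulVec_self_of_isSymm hCA]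
  have hyy : (B *ᵥ y) ⬝ᵥ (D *ᵥ y) = ∑ i, (Dᵀ * B) i i * y i ^ 2 := by
    rw [dot_mulVec, hBD, dotProduct_mulVec_self_of_isSymm hDB]
  have hxy : (A *ᵥ x) ⬝ᵥ (D *ᵥ y) + (B *ᵥ y) ⬝ᵥ (C *ᵥ x) = x ⬝ᵥ y := by
    have h := congrArg (fun M ↦ x ⬝ᵥ M *ᵥ y) hAD
    simp only [sub_mulVec, dotProduct_sub, one_mulVec] at h
    rw [dotProduct_comm (B *ᵥ y), dot_mulVec, dot_mulVec]
    linear_combination h + CharTwo.add_self_eq_zero (x ⬝ᵥ (Cᵀ * B) *ᵥ y)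
  rw [fromBlocks_mulVec, hyperbolicForm_elim, hyperbolicForm_elim, Fintype.sum_sum_type]
  simp only [Sum.elim_inl, Sum.elim_inr, Sum.elim_comp_inl, Sum.elim_comp_inr, diag_apply,
    dotProduct_add, add_dotProduct, hxx, hyy]
  linear_combination hxy

end HyperbolicForm

section Integral

variable {g : ℕ}

lemma IsSymplecticInt.toBlocks_relations {N : Matrix (Fin g ⊕ Fin g) (Fin g ⊕ Fin g) ℤ}
    (hN : IsSymplecticInt g N) :
    N.toBlocks₁₁ᵀ * N.toBlocks₂₁ = N.toBlocks₂₁ᵀ * N.toBlocks₁₁ ∧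
    N.toBlocks₁₂ᵀ * N.toBlocks₂₂ = N.toBlocks₂₂ᵀ * N.toBlocks₁₂ ∧
    N.toBlocks₁₁ᵀ * N.toBlocks₂₂ - N.toBlocks₂₁ᵀ * N.toBlocks₁₂ = 1 := by
  rw [IsSymplecticInt, Jmat, ← fromBlocks_toBlocks N, fromBlocks_transpose, fromBlocks_multiply,
    fromBlocks_multiply, fromBlocks_inj] at hN
  simp only [Matrix.mul_one, Matrix.mul_zero, Matrix.mul_neg, Matrix.neg_mul, zero_add, add_zero,
    neg_add_eq_sub] at hN
  obtain ⟨h₁₁, h₁₂, -, h₂₂⟩ := hN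
  exact ⟨sub_eq_zero.mp h₁₁, sub_eq_zero.mp h₂₂, h₁₂⟩

lemma IsSymplecticInt.mul {M N : Matrix (Fin g ⊕ Fin g) (Fin g ⊕ Fin g) ℤ}
    (hM : IsSymplecticInt g M) (hN : IsSymplecticInt g N) : IsSymplecticInt g (M * N) :=
  calc (M * N)ᵀ * Jmat g * (M * N) = Nᵀ * (Mᵀ * Jmat g * M) * N := by
        simp only [transpose_mul, Matrix.mul_assoc]
    _ = Jmat g := by rw [hM]; exact hN

lemma IsSymplecticInt.of_mul_eq_one {M N : Matrix (Fin g ⊕ Fin g) (Fin g ⊕ Fin g) ℤ}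
    (hMN : M * N = 1) (hM : IsSymplecticInt g M) : IsSymplecticInt g N :=
  calc Nᵀ * Jmat g * N = Nᵀ * (Mᵀ * Jmat g * M) * N := by rw [hM]
    _ = (M * N)ᵀ * Jmat g * (M * N) := by simp only [transpose_mul, Matrix.mul_assoc]
    _ = Jmat g := by simp [hMN]

def symplecticUnits (g : ℕ) : Subgroup (Matrix (Fin g ⊕ Fin g) (Fin g ⊕ Fin g) ℤ)ˣ where
  carrier := {U | IsSymplecticInt g U}
  one_mem' := by simp [IsSymplecticInt]
  mul_mem' hU hV := hU.mul hV
  inv_mem' {U} hU := hU.of_mul_eq_one U.mul_inv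

lemma IsSymplecticInt.hyperbolicForm_map_mulVec {N : Matrix (Fin g ⊕ Fin g) (Fin g ⊕ Fin g) ℤ}
    (hN : IsSymplecticInt g N) (v : Fin g ⊕ Fin g → ZMod 2) :
    hyperbolicForm (N.map (Int.castRingHom (ZMod 2)) *ᵥ v) = hyperbolicForm v +
      ∑ k, ((Sum.elim (N.toBlocks₂₁ᵀ * N.toBlocks₁₁).diag (N.toBlocks₂₂ᵀ * N.toBlocks₁₂).diag k
        : ℤ) : ZMod 2) * v k ^ 2 := by
  obtain ⟨hAC, hBD, hAD⟩ := hN.toBlocks_relations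
  set φ := Int.castRingHom (ZMod 2)
  have hmap : N.map φ = fromBlocks (N.toBlocks₁₁.map φ) (N.toBlocks₁₂.map φ)
      (N.toBlocks₂₁.map φ) (N.toBlocks₂₂.map φ) := by
    rw [← fromBlocks_map, fromBlocks_toBlocks]
  have map_rel {X Y Z W : Matrix (Fin g) (Fin g) ℤ} (h : Xᵀ * Y = Zᵀ * W) :
      (X.map φ)ᵀ * Y.map φ = (Z.map φ)ᵀ * W.map φ := by
    simp only [← transpose_map, ← Matrix.map_mul, h]
  rw [hmap, hyperbolicForm_fromBlocks_mulVec (map_rel hAC) (map_rel hBD)]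
  · refine congrArg _ (Finset.sum_congr rfl ?_)
    rintro (i | i) - <;> simp only [← transpose_map, ← Matrix.map_mul] <;> rfl
  · simpa only [map_sub, map_mul, map_one, RingHom.mapMatrix_apply, transpose_map]
      using congrArg φ.mapMatrix hAD

lemma IsSymplecticInt.evenDiagCond_iff {N : Matrix (Fin g ⊕ Fin g) (Fin g ⊕ Fin g) ℤ}
    (hN : IsSymplecticInt g N) :
    EvenDiagCond g N ↔
      ∀ v, hyperbolicForm (N.map (Int.castRingHom (ZMod 2)) *ᵥ v) = hyperbolicForm v := by
  simp_rw [hN.hyperbolicForm_map_mulVec, add_eq_left]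
  rw [forall_sum_mul_sq_eq_zero_iff, funext_iff, Sum.forall]
  simp [ZMod.intCast_eq_zero_iff_even, EvenDiagCond, forall_and]

end Integral

theorem spq_subgroup_general (g : ℕ) :
    ∃ H : Subgroup (Matrix (Fin g ⊕ Fin g) (Fin g ⊕ Fin g) ℤ)ˣ,
      ∀ M : (Matrix (Fin g ⊕ Fin g) (Fin g ⊕ Fin g) ℤ)ˣ,
        M ∈ H ↔ (IsSymplecticInt g (M : Matrix (Fin g ⊕ Fin g) (Fin g ⊕ Fin g) ℤ) ∧
          EvenDiagCond g (M : Matrix (Fin g ⊕ Fin g) (Fin g ⊕ Fin g) ℤ)) := by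
  refine ⟨symplecticUnits g ⊓ (stabilizerUnits hyperbolicForm).comap
    (Units.map (Int.castRingHom (ZMod 2)).mapMatrix.toMonoidHom), fun M ↦ ?_⟩
  rw [Subgroup.mem_inf, Subgroup.mem_comap]
  exact and_congr_right fun hM ↦ hM.evenDiagCond_iff.symm

/-- For `g ≥ 1`, the set of symplectic `2g×2g` integer matrices `(A B; C D)` such
that all diagonal entries of `CᵀA` and of `DᵀB` are even forms a subgroup of
`Sp_{2g}(ℤ)` (realized inside the group of invertible `2g×2g` integer matrices). -/
theorem spq_subgroup (g : ℕ) (hg : 1 ≤ g) :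
    ∃ H : Subgroup (Matrix (Fin g ⊕ Fin g) (Fin g ⊕ Fin g) ℤ)ˣ,
      ∀ M : (Matrix (Fin g ⊕ Fin g) (Fin g ⊕ Fin g) ℤ)ˣ,
        M ∈ H ↔ (IsSymplecticInt g (M : Matrix (Fin g ⊕ Fin g) (Fin g ⊕ Fin g) ℤ) ∧
          EvenDiagCond g (M : Matrix (Fin g ⊕ Fin g) (Fin g ⊕ Fin g) ℤ)) :=
  spq_subgroup_general g
end

section
/- In the polynomial ring ℚ[x], if an ideal I is generated by a subset of the ℚ-linear span of x², then I = 0 or I = (x²). Consequently, for n ≥ 2, the quotient ℚ[x]/(x^{n+1}) is not isomorphic, as a ℚ-algebra, to any quotient ℚ[x]/I with I generated by elements of the span of x². -/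
open Polynomial

/-!
Any nonzero scalar multiple of `X²` generates `(X²)`, so the only ideals generated inside `ℚ • X²`
are `0` and `(X²)`. Neither quotient matches `ℚ[X]/(X^{n+1})`: `ℚ[X]/0` is reduced while the class
of `X` is a nonzero nilpotent in `ℚ[X]/(X^{n+1})`, and `ℚ[X]/(X²)` has dimension `2 ≠ n + 1`.
-/

theorem Ideal.span_eq_bot_or_eq_span_singleton_of_subset_span {K A : Type*} [Field K]
    [CommSemiring A] [Algebra K A] {p : A} {S : Set A} (hS : S ⊆ K ∙ p) :
    Ideal.span S = ⊥ ∨ Ideal.span S = Ideal.span {p} := by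
  by_cases hzero : ∀ s ∈ S, s = 0
  · exact Or.inl (Ideal.span_eq_bot.2 hzero)
  push Not at hzero
  obtain ⟨s, hsS, hs⟩ := hzero
  obtain ⟨c, rfl⟩ := Submodule.mem_span_singleton.1 (hS hsS)
  have hc : c ≠ 0 := by rintro rfl; exact hs (zero_smul K p)
  refine Or.inr (le_antisymm ?_ ?_)
  · rw [Ideal.span_le]
    intro t htS
    obtain ⟨d, rfl⟩ := Submodule.mem_span_singleton.1 (hS htS)
    rw [Algebra.smul_def]
    exact Ideal.mul_mem_left _ _ (Ideal.mem_span_singleton_self p)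
  · rw [Ideal.span_singleton_le_iff_mem, ← inv_smul_smul₀ hc p, Algebra.smul_def]
    exact Ideal.mul_mem_left _ _ (Ideal.subset_span hsS)

theorem Polynomial.finrank_quotient_span_X_pow (K : Type*) [Field K] (k : ℕ) :
    Module.finrank K (K[X] ⧸ Ideal.span {(X : K[X]) ^ k}) = k := by
  have := (AdjoinRoot.powerBasis (pow_ne_zero k (X_ne_zero : (X : K[X]) ≠ 0))).finrank
  rwa [AdjoinRoot.powerBasis_dim, natDegree_X_pow] at this

theorem Polynomial.not_isReduced_quotient_span_X_pow {K : Type*} [Field K] {k : ℕ}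
    (hk : 2 ≤ k) : ¬ IsReduced (K[X] ⧸ Ideal.span {(X : K[X]) ^ k}) := by
  intro _
  have hnil : IsNilpotent (Ideal.Quotient.mk (Ideal.span {(X : K[X]) ^ k}) X) :=
    ⟨k, by rw [← map_pow, Ideal.Quotient.eq_zero_iff_mem]; exact Ideal.mem_span_singleton_self _⟩
  have hdvd := hnil.eq_zero
  rw [Ideal.Quotient.eq_zero_iff_mem, Ideal.mem_span_singleton] at hdvd
  have := natDegree_le_of_dvd hdvd X_ne_zero
  rw [natDegree_X_pow, natDegree_X] at this
  omega

/-- In `ℚ[x]`, if an ideal is generated by a subset of the `ℚ`-linear span of `x²`,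
then it is `0` or `(x²)`.  Consequently, for `n ≥ 2`, the quotient `ℚ[x]/(x^{n+1})`
is not isomorphic as a `ℚ`-algebra to any quotient `ℚ[x]/I` with `I` generated by
elements of the span of `x²`; i.e. the cohomology ring of `ℂPⁿ` admits no quadratic
presentation on one generator. -/
theorem quadratic_ideal_classification :
    (∀ S : Set ℚ[X], S ⊆ (Submodule.span ℚ {(X : ℚ[X]) ^ 2} : Submodule ℚ ℚ[X]) →
      Ideal.span S = ⊥ ∨ Ideal.span S = Ideal.span {(X : ℚ[X]) ^ 2}) ∧
    (∀ n : ℕ, 2 ≤ n → ∀ S : Set ℚ[X],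
      S ⊆ (Submodule.span ℚ {(X : ℚ[X]) ^ 2} : Submodule ℚ ℚ[X]) →
      IsEmpty ((ℚ[X] ⧸ Ideal.span {(X : ℚ[X]) ^ (n + 1)}) ≃ₐ[ℚ] (ℚ[X] ⧸ Ideal.span S))) := by
  refine ⟨fun S hS => Ideal.span_eq_bot_or_eq_span_singleton_of_subset_span hS,
    fun n hn S hS => ⟨fun e => ?_⟩⟩
  rcases Ideal.span_eq_bot_or_eq_span_singleton_of_subset_span hS with h | h
  · rw [h] at e
    exact not_isReduced_quotient_span_X_pow (by omega) (isReduced_of_injective e e.injective)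
  · rw [h] at e
    have := e.toLinearEquiv.finrank_eq
    rw [finrank_quotient_span_X_pow, finrank_quotient_span_X_pow] at this
    omega
end
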